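/- Let T₁ ∈ B(H₁) with ‖T₁‖ < 1 and let T₂ ∈ B(H₂) be polynomially bounded. Then for every bounded operator X : H₂ → H₁, the upper triangular block operator R = [[T₁, X],[0, T₂]] on H₁ ⊕ H₂ is polynomially bounded; moreover for p = Σ_{k=0}^d a_k z^k, the off-diagonal block of p(R) equals δ_X(p) = Σ_{j=0}^{d-1} T₁^j X Π_j(T₂) where Π_j(z) = Σ_{k=j+1}^d a_k z^{k-1-j}, and ‖δ_X(p)‖ ≤ (Σ_{j=0}^∞ (1 + log(j+1)) ‖T₁‖^j) C₂ M ‖X‖ ‖p‖_∞ for suitable constants C₂, M. -/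

import Mathlib

/-!
From `R^n = [[T₁^n, Σ_{j<n} T₁^j X T₂^(n-1-j)], [0, T₂^n]]`, collecting the powers of `T₂` gives
`δ_X(p) = Σ_j T₁^j X Π_j(T₂)`. Cauchy's estimate bounds every coefficient of `p` by `‖p‖_∞`, so on
the unit circle `|Π_j(z)| = |p(z) - Σ_{k≤j} a_k z^k| ≤ (j + 2) ‖p‖_∞`, and by the maximum modulus
principle the same holds on the disc. Hence `‖δ_X(p)‖ ≤ Σ_j (j + 2) ‖T₁‖^j C₂ ‖X‖ ‖p‖_∞`, a
convergent series since `‖T₁‖ < 1`; it serves as the constant `M`, the logarithmic series being at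
least `1`. The coefficient bound also gives `‖p(T₁)‖ ≤ (1 - ‖T₁‖)⁻¹ ‖p‖_∞`, and the three blocks
of `p(R)` together bound `‖p(R)‖`.
-/

/-- An operator `T` is polynomially bounded if `‖p(T)‖ ≤ C ‖p‖_∞` for all polynomials. -/
def PolynomiallyBounded {E : Type*} [NormedAddCommGroup E] [NormedSpace ℂ E]
    (T : E →L[ℂ] E) : Prop :=
  ∃ C > (0 : ℝ), ∀ (p : Polynomial ℂ) (B : ℝ),
    (∀ z : ℂ, ‖z‖ ≤ 1 → ‖Polynomial.eval z p‖ ≤ B) →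
    ‖(Polynomial.aeval T p : E →L[ℂ] E)‖ ≤ C * B

open Polynomial Finset Metric

namespace Polynomial

theorem iteratedDeriv_eval {𝕜 : Type*} [NontriviallyNormedField 𝕜] (p : 𝕜[X]) (k : ℕ) :
    iteratedDeriv k (fun z => p.eval z) = fun z => (derivative^[k] p).eval z := by
  rw [iteratedDeriv_eq_iterate]
  induction k generalizing p with
  | zero => rfl
  | succ k ih =>
    have hderiv : _root_.deriv (fun z => p.eval z) = fun z => p.derivative.eval z :=
      _root_.funext fun _ => p.deriv
    rw [Function.iterate_succ_apply, Function.iterate_succ_apply, hderiv, ih]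

theorem norm_coeff_le_of_forall_norm_eval_le {p : ℂ[X]} {B : ℝ}
    (hB : ∀ z : ℂ, ‖z‖ ≤ 1 → ‖p.eval z‖ ≤ B) (k : ℕ) : ‖p.coeff k‖ ≤ B := by
  have hcauchy := Complex.norm_iteratedDeriv_le_of_forall_mem_sphere_norm_le k one_pos
    p.differentiable.diffContOnCl (c := 0) fun z hz => hB z (mem_sphere_zero_iff_norm.mp hz).le
  simp only [iteratedDeriv_eval] at hcauchy
  rw [← coeff_zero_eq_eval_zero, coeff_iterate_derivative, zero_add,
    Nat.descFactorial_self, nsmul_eq_mul, norm_mul, Complex.norm_natCast, one_pow,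
    div_one] at hcauchy
  exact le_of_mul_le_mul_left hcauchy (by positivity)

theorem norm_eval_le_of_forall_norm_eq_one {p : ℂ[X]} {B : ℝ}
    (hB : ∀ z : ℂ, ‖z‖ = 1 → ‖p.eval z‖ ≤ B) {z : ℂ} (hz : ‖z‖ ≤ 1) : ‖p.eval z‖ ≤ B := by
  refine Complex.norm_le_of_forall_mem_frontier_norm_le (U := ball 0 1) isBounded_ball
    p.differentiable.diffContOnCl (fun w hw => hB w ?_) ?_
  · rwa [frontier_ball (0 : ℂ) one_ne_zero, mem_sphere_zero_iff_norm] at hw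
  · rwa [closure_ball (0 : ℂ) one_ne_zero, mem_closedBall_zero_iff]

/-- The paper's `Π_j = D^{j+1} p`, i.e. the quotient of `p` by `X ^ (j + 1)`. -/
noncomputable def quotXPowSucc {R : Type*} [Semiring R] (p : R[X]) (j : ℕ) : R[X] :=
  ∑ k ∈ Icc (j + 1) p.natDegree, C (p.coeff k) * X ^ (k - 1 - j)

theorem pow_mul_eval_quotXPowSucc_add {R : Type*} [CommSemiring R] (p : R[X]) (j : ℕ) (z : R) :
    z ^ (j + 1) * (quotXPowSucc p j).eval z + ∑ k ∈ range (j + 1), p.coeff k * z ^ k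
      = p.eval z := by
  rcases le_or_gt j p.natDegree with hj | hj
  · have hhigh : z ^ (j + 1) * (quotXPowSucc p j).eval z
        = ∑ k ∈ Ico (j + 1) (p.natDegree + 1), p.coeff k * z ^ k := by
      rw [quotXPowSucc, eval_finsetSum, mul_sum, ← Ico_add_one_right_eq_Icc]
      refine sum_congr rfl fun k hk => ?_
      rw [eval_mul, eval_C, eval_pow, eval_X, mul_left_comm, ← pow_add]
      congr 2
      have := (mem_Ico.mp hk).1
      omega
    rw [hhigh, add_comm, sum_range_add_sum_Ico _ (by omega), eval_eq_sum_range]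
  · rw [quotXPowSucc, Icc_eq_empty (by omega), sum_empty, eval_zero, mul_zero, zero_add,
      eval_eq_sum_range' (n := j + 1) (by omega)]

theorem norm_eval_quotXPowSucc_le {p : ℂ[X]} {B : ℝ} (hB : ∀ z : ℂ, ‖z‖ ≤ 1 → ‖p.eval z‖ ≤ B)
    (j : ℕ) {z : ℂ} (hz : ‖z‖ ≤ 1) : ‖(quotXPowSucc p j).eval z‖ ≤ (j + 2) * B := by
  refine norm_eval_le_of_forall_norm_eq_one (fun w hw => ?_) hz
  have hlow : ‖∑ k ∈ range (j + 1), p.coeff k * w ^ k‖ ≤ (j + 1) * B := by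
    refine (norm_sum_le _ _).trans ?_
    refine (sum_le_sum (g := fun _ => B) fun k _ => ?_).trans_eq (by simp)
    rw [norm_mul, norm_pow, hw, one_pow, mul_one]
    exact norm_coeff_le_of_forall_norm_eval_le hB k
  calc ‖(quotXPowSucc p j).eval w‖
      = ‖p.eval w - ∑ k ∈ range (j + 1), p.coeff k * w ^ k‖ := by
        rw [← pow_mul_eval_quotXPowSucc_add p j w, add_sub_cancel_right, norm_mul, norm_pow, hw,
          one_pow, one_mul]
    _ ≤ B + (j + 1) * B := (norm_sub_le _ _).trans (add_le_add (hB w hw.le) hlow)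
    _ = (j + 2) * B := by ring

end Polynomial

theorem summable_natCast_add_two_mul_pow {r : ℝ} (h0 : 0 ≤ r) (h1 : r < 1) :
    Summable fun j : ℕ => ((j : ℝ) + 2) * r ^ j :=
  ((summable_pow_mul_geometric_of_norm_lt_one 1 (by rwa [Real.norm_of_nonneg h0])).add
    ((summable_geometric_of_lt_one h0 h1).mul_left 2)).congr fun j => by ring

theorem one_le_tsum_one_add_log_mul_pow {r : ℝ} (h0 : 0 ≤ r) (h1 : r < 1) :
    1 ≤ ∑' j : ℕ, (1 + Real.log (j + 1)) * r ^ j := by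
  have hlog (j : ℕ) : 0 ≤ Real.log (j + 1) ∧ Real.log (j + 1) ≤ j := by
    constructor
    · exact Real.log_nonneg (le_add_of_nonneg_left j.cast_nonneg)
    · linarith [Real.log_le_sub_one_of_pos (show (0 : ℝ) < j + 1 by positivity)]
  have hnonneg (j : ℕ) : 0 ≤ (1 + Real.log (j + 1)) * r ^ j :=
    mul_nonneg (by linarith [hlog j]) (pow_nonneg h0 j)
  have hsummable : Summable fun j : ℕ => (1 + Real.log (j + 1)) * r ^ j :=
    (summable_natCast_add_two_mul_pow h0 h1).of_nonneg_of_le hnonneg fun j =>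
      mul_le_mul_of_nonneg_right (by linarith [hlog j]) (pow_nonneg h0 j)
  simpa using hsummable.le_tsum 0 fun j _ => hnonneg j

namespace ContinuousLinearMap

theorem norm_pow_le_pow_norm {𝕜 E : Type*} [NontriviallyNormedField 𝕜]
    [NormedAddCommGroup E] [NormedSpace 𝕜 E] (T : E →L[𝕜] E) (n : ℕ) : ‖T ^ n‖ ≤ ‖T‖ ^ n := by
  rcases n.eq_zero_or_pos with rfl | hn
  · simpa [one_def] using norm_id_le
  · exact norm_pow_le' T hn

section UpperTriangular

variable {𝕜 E F : Type*} [NontriviallyNormedField 𝕜] [NormedAddCommGroup E] [NormedSpace 𝕜 E]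
  [NormedAddCommGroup F] [NormedSpace 𝕜 F] (A : E →L[𝕜] E) (X : F →L[𝕜] E) (D : F →L[𝕜] F)

def upperTriangular : E × F →L[𝕜] E × F :=
  (A.comp (fst 𝕜 E F) + X.comp (snd 𝕜 E F)).prod (D.comp (snd 𝕜 E F))

noncomputable def upperTriangularOffDiag (p : 𝕜[X]) : F →L[𝕜] E :=
  ∑ j ∈ range p.natDegree, (A ^ j).comp (X.comp (aeval D (p.quotXPowSucc j)))

theorem upperTriangular_apply (v : E × F) :
    upperTriangular A X D v = (A v.1 + X v.2, D v.2) := rfl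

theorem upperTriangular_pow_apply (n : ℕ) (v : E × F) :
    (upperTriangular A X D ^ n) v =
      ((A ^ n) v.1 + (∑ j ∈ range n, (A ^ j).comp (X.comp (D ^ (n - 1 - j)))) v.2,
        (D ^ n) v.2) := by
  induction n with
  | zero => simp
  | succ n ih =>
    rw [pow_succ', mul_apply_eq_comp, ih, upperTriangular_apply, sum_range_succ']
    simp [pow_succ', map_sum, Nat.sub_sub, Nat.add_comm 1, add_assoc]

theorem sum_coeff_smul_sum_pow_eq_upperTriangularOffDiag (p : 𝕜[X]) :
    ∑ k ∈ range (p.natDegree + 1),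
        p.coeff k • ∑ j ∈ range k, (A ^ j).comp (X.comp (D ^ (k - 1 - j))) =
      upperTriangularOffDiag A X D p := by
  simp_rw [smul_sum]
  rw [sum_comm' (t' := range p.natDegree) (s' := fun j => Icc (j + 1) p.natDegree)
    fun k j => by simp only [mem_range, mem_Icc]; omega]
  refine sum_congr rfl fun j _ => ?_
  simp [Polynomial.quotXPowSucc, map_sum, comp_finsetSum, Algebra.algebraMap_eq_smul_one]

theorem aeval_upperTriangular_apply (p : 𝕜[X]) (v : E × F) :
    aeval (upperTriangular A X D) p v =
      (aeval A p v.1 + upperTriangularOffDiag A X D p v.2, aeval D p v.2) := by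
  rw [aeval_eq_sum_range, aeval_eq_sum_range (x := A), aeval_eq_sum_range (x := D),
    ← sum_coeff_smul_sum_pow_eq_upperTriangularOffDiag]
  simp only [_root_.sum_apply, smul_apply, upperTriangular_pow_apply]
  ext <;> simp only [Prod.fst_sum, Prod.snd_sum, Prod.smul_fst, Prod.smul_snd, smul_add,
    sum_add_distrib]

theorem fst_comp_aeval_upperTriangular_comp_inr (p : 𝕜[X]) :
    (fst 𝕜 E F).comp ((aeval (upperTriangular A X D) p).comp (inr 𝕜 E F)) =
      upperTriangularOffDiag A X D p := by
  ext y
  simp [aeval_upperTriangular_apply]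

end UpperTriangular

end ContinuousLinearMap

open ContinuousLinearMap

section PolynomiallyBoundedWith

variable {E F : Type*} [NormedAddCommGroup E] [NormedSpace ℂ E] [NormedAddCommGroup F]
  [NormedSpace ℂ F]

def PolynomiallyBoundedWith (C : ℝ) (T : E →L[ℂ] E) : Prop :=
  ∀ (p : ℂ[X]) (B : ℝ), (∀ z : ℂ, ‖z‖ ≤ 1 → ‖p.eval z‖ ≤ B) → ‖aeval T p‖ ≤ C * B

theorem PolynomiallyBoundedWith.nonneg {C : ℝ} {T : E →L[ℂ] E}
    (h : PolynomiallyBoundedWith C T) : 0 ≤ C := by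
  simpa using h 0 1 (by simp)

theorem polynomiallyBoundedWith_of_norm_lt_one {T : E →L[ℂ] E} (hT : ‖T‖ < 1) :
    PolynomiallyBoundedWith (1 - ‖T‖)⁻¹ T := by
  intro p B hB
  have hB0 : 0 ≤ B := (norm_nonneg _).trans (hB 0 (by simp))
  have hgeom : ∑ k ∈ range (p.natDegree + 1), ‖T‖ ^ k ≤ (1 - ‖T‖)⁻¹ := by
    rw [← tsum_geometric_of_lt_one (norm_nonneg T) hT]
    exact (summable_geometric_of_lt_one (norm_nonneg T) hT).sum_le_tsum _
      fun k _ => pow_nonneg (norm_nonneg T) k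
  rw [aeval_eq_sum_range]
  calc ‖∑ k ∈ range (p.natDegree + 1), p.coeff k • T ^ k‖
      ≤ ∑ k ∈ range (p.natDegree + 1), B * ‖T‖ ^ k := by
        refine norm_sum_le_of_le _ fun k _ => ?_
        rw [norm_smul]
        exact mul_le_mul (p.norm_coeff_le_of_forall_norm_eval_le hB k) (norm_pow_le_pow_norm T k)
          (norm_nonneg _) hB0
    _ = B * ∑ k ∈ range (p.natDegree + 1), ‖T‖ ^ k := (mul_sum _ _ _).symm
    _ ≤ (1 - ‖T‖)⁻¹ * B := by rw [mul_comm _ B]; exact mul_le_mul_of_nonneg_left hgeom hB0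

theorem norm_upperTriangularOffDiag_le {A : E →L[ℂ] E} (X : F →L[ℂ] E) {D : F →L[ℂ] F}
    {C : ℝ} (hA : ‖A‖ < 1) (hD : PolynomiallyBoundedWith C D) {p : ℂ[X]} {B : ℝ}
    (hB : ∀ z : ℂ, ‖z‖ ≤ 1 → ‖p.eval z‖ ≤ B) :
    ‖upperTriangularOffDiag A X D p‖ ≤ (∑' j : ℕ, ((j : ℝ) + 2) * ‖A‖ ^ j) * C * ‖X‖ * B := by
  have hB0 : 0 ≤ B := (norm_nonneg _).trans (hB 0 (by simp))
  have hterm (j : ℕ) : ‖(A ^ j).comp (X.comp (aeval D (p.quotXPowSucc j)))‖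
      ≤ ((j : ℝ) + 2) * ‖A‖ ^ j * (C * ‖X‖ * B) :=
    calc _ ≤ ‖A ^ j‖ * (‖X‖ * ‖aeval D (p.quotXPowSucc j)‖) :=
          (opNorm_comp_le _ _).trans (by gcongr; exact opNorm_comp_le _ _)
      _ ≤ ‖A‖ ^ j * (‖X‖ * (C * ((j + 2) * B))) := by
          gcongr
          · exact norm_pow_le_pow_norm A j
          · exact hD _ _ fun z hz => p.norm_eval_quotXPowSucc_le hB j hz
      _ = ((j : ℝ) + 2) * ‖A‖ ^ j * (C * ‖X‖ * B) := by ring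
  calc ‖upperTriangularOffDiag A X D p‖
      ≤ ∑ j ∈ range p.natDegree, ((j : ℝ) + 2) * ‖A‖ ^ j * (C * ‖X‖ * B) :=
        norm_sum_le_of_le _ fun j _ => hterm j
    _ = (∑ j ∈ range p.natDegree, ((j : ℝ) + 2) * ‖A‖ ^ j) * (C * ‖X‖ * B) := (sum_mul _ _ _).symm
    _ ≤ (∑' j : ℕ, ((j : ℝ) + 2) * ‖A‖ ^ j) * (C * ‖X‖ * B) := by
        refine mul_le_mul_of_nonneg_right ?_ (by have := hD.nonneg; positivity)
        exact (summable_natCast_add_two_mul_pow (norm_nonneg A) hA).sum_le_tsum _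
          fun j _ => by positivity
    _ = _ := by ring

theorem PolynomiallyBoundedWith.upperTriangular {A : E →L[ℂ] E} {X : F →L[ℂ] E}
    {D : F →L[ℂ] F} {C₁ C₂ K : ℝ} (hA : PolynomiallyBoundedWith C₁ A)
    (hD : PolynomiallyBoundedWith C₂ D)
    (hX : ∀ (p : ℂ[X]) (B : ℝ), (∀ z : ℂ, ‖z‖ ≤ 1 → ‖p.eval z‖ ≤ B) →
      ‖upperTriangularOffDiag A X D p‖ ≤ K * B) :
    PolynomiallyBoundedWith (max (C₁ + K) C₂) (upperTriangular A X D) := by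
  intro p B hB
  have hC₁B := (norm_nonneg _).trans (hA p B hB)
  have hKB := (norm_nonneg _).trans (hX p B hB)
  have hC₂B := (norm_nonneg _).trans (hD p B hB)
  have hB0 : 0 ≤ B := (norm_nonneg _).trans (hB 0 (by simp))
  rw [max_mul_of_nonneg _ _ hB0]
  refine opNorm_le_bound _ (le_max_of_le_right hC₂B) fun v => ?_
  rw [aeval_upperTriangular_apply, Prod.norm_def, max_mul_of_nonneg _ _ (norm_nonneg v)]
  refine max_le_max ?_ ((le_of_opNorm_le _ (hD p B hB) _).trans ?_)
  · calc ‖aeval A p v.1 + upperTriangularOffDiag A X D p v.2‖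
        ≤ C₁ * B * ‖v.1‖ + K * B * ‖v.2‖ :=
          norm_add_le_of_le (le_of_opNorm_le _ (hA p B hB) _) (le_of_opNorm_le _ (hX p B hB) _)
      _ ≤ C₁ * B * ‖v‖ + K * B * ‖v‖ := by gcongr; exacts [norm_fst_le v, norm_snd_le v]
      _ = (C₁ + K) * B * ‖v‖ := by ring
  · gcongr
    exact norm_snd_le v

end PolynomiallyBoundedWith

theorem stmt_11_general {H₁ H₂ : Type*}
    [NormedAddCommGroup H₁] [InnerProductSpace ℂ H₁]
    [NormedAddCommGroup H₂] [InnerProductSpace ℂ H₂]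
    (T₁ : H₁ →L[ℂ] H₁) (T₂ : H₂ →L[ℂ] H₂) (hT₁ : ‖T₁‖ < 1)
    (C₂ : ℝ)
    (hC₂ : ∀ (p : Polynomial ℂ) (B : ℝ),
      (∀ z : ℂ, ‖z‖ ≤ 1 → ‖Polynomial.eval z p‖ ≤ B) →
      ‖(Polynomial.aeval T₂ p : H₂ →L[ℂ] H₂)‖ ≤ C₂ * B)
    (X : H₂ →L[ℂ] H₁) :
    letI R : (H₁ × H₂) →L[ℂ] (H₁ × H₂) :=
      ((T₁.comp (ContinuousLinearMap.fst ℂ H₁ H₂) +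
          X.comp (ContinuousLinearMap.snd ℂ H₁ H₂))).prod
        (T₂.comp (ContinuousLinearMap.snd ℂ H₁ H₂))
    letI delta : Polynomial ℂ → (H₂ →L[ℂ] H₁) := fun p =>
      (ContinuousLinearMap.fst ℂ H₁ H₂).comp
        ((Polynomial.aeval R p : (H₁ × H₂) →L[ℂ] (H₁ × H₂)).comp
          (ContinuousLinearMap.inr ℂ H₁ H₂))
    PolynomiallyBounded R ∧
    (∀ p : Polynomial ℂ, delta p =
      ∑ j ∈ Finset.range p.natDegree,
        (T₁ ^ j).comp (X.comp
          (Polynomial.aeval T₂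
            (∑ k ∈ Finset.Icc (j + 1) p.natDegree,
              Polynomial.C (p.coeff k) * Polynomial.X ^ (k - 1 - j)) : H₂ →L[ℂ] H₂))) ∧
    ∃ M > (0 : ℝ), ∀ (p : Polynomial ℂ) (B : ℝ),
      (∀ z : ℂ, ‖z‖ ≤ 1 → ‖Polynomial.eval z p‖ ≤ B) →
      ‖delta p‖ ≤
        (∑' j : ℕ, (1 + Real.log (j + 1)) * ‖T₁‖ ^ j) * C₂ * M * ‖X‖ * B := by
  have hT₂ : PolynomiallyBoundedWith C₂ T₂ := hC₂
  have hdelta (p : ℂ[X]) := fst_comp_aeval_upperTriangular_comp_inr T₁ X T₂ p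
  set M := ∑' j : ℕ, ((j : ℝ) + 2) * ‖T₁‖ ^ j
  have hM : 2 ≤ M := by
    simpa using (summable_natCast_add_two_mul_pow (norm_nonneg T₁) hT₁).le_tsum 0
      fun j _ => by positivity
  have hMC₂X : 0 ≤ M * C₂ * ‖X‖ := by have := hT₂.nonneg; positivity
  refine ⟨⟨_, lt_max_of_lt_left (add_pos_of_pos_of_nonneg (inv_pos.2 (sub_pos.2 hT₁)) hMC₂X),
      (polynomiallyBoundedWith_of_norm_lt_one hT₁).upperTriangular hT₂
        fun p B hB => norm_upperTriangularOffDiag_le X hT₁ hT₂ hB⟩,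
    hdelta, M, zero_lt_two.trans_le hM, fun p B hB => (congrArg norm (hdelta p)).trans_le ?_⟩
  have hB0 : 0 ≤ B := (norm_nonneg _).trans (hB 0 (by simp))
  calc ‖upperTriangularOffDiag T₁ X T₂ p‖ ≤ M * C₂ * ‖X‖ * B :=
        norm_upperTriangularOffDiag_le X hT₁ hT₂ hB
    _ ≤ (∑' j : ℕ, (1 + Real.log (j + 1)) * ‖T₁‖ ^ j) * (M * C₂ * ‖X‖ * B) :=
        le_mul_of_one_le_left (mul_nonneg hMC₂X hB0)
          (one_le_tsum_one_add_log_mul_pow (norm_nonneg T₁) hT₁)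
    _ = _ := by ring

/-- If `‖T₁‖ < 1` and `T₂` is polynomially bounded (with constant `C₂`), then for every
bounded `X` the block operator `R = [[T₁, X], [0, T₂]]` is polynomially bounded; the
off-diagonal block of `p(R)` equals `δ_X(p) = Σ_{j<d} T₁^j X Π_j(T₂)` with
`Π_j(z) = Σ_{k=j+1}^d a_k z^{k-1-j}`, and
`‖δ_X(p)‖ ≤ (Σ_j (1+log(j+1))‖T₁‖^j) C₂ M ‖X‖ ‖p‖_∞` for a suitable constant `M`. -/
theorem stmt_11 {H₁ H₂ : Type*}
    [NormedAddCommGroup H₁] [InnerProductSpace ℂ H₁] [CompleteSpace H₁]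
    [NormedAddCommGroup H₂] [InnerProductSpace ℂ H₂] [CompleteSpace H₂]
    (T₁ : H₁ →L[ℂ] H₁) (T₂ : H₂ →L[ℂ] H₂) (hT₁ : ‖T₁‖ < 1)
    (C₂ : ℝ) (hC₂pos : 0 < C₂)
    (hC₂ : ∀ (p : Polynomial ℂ) (B : ℝ),
      (∀ z : ℂ, ‖z‖ ≤ 1 → ‖Polynomial.eval z p‖ ≤ B) →
      ‖(Polynomial.aeval T₂ p : H₂ →L[ℂ] H₂)‖ ≤ C₂ * B)
    (X : H₂ →L[ℂ] H₁) :
    letI R : (H₁ × H₂) →L[ℂ] (H₁ × H₂) :=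
      ((T₁.comp (ContinuousLinearMap.fst ℂ H₁ H₂) +
          X.comp (ContinuousLinearMap.snd ℂ H₁ H₂))).prod
        (T₂.comp (ContinuousLinearMap.snd ℂ H₁ H₂))
    letI delta : Polynomial ℂ → (H₂ →L[ℂ] H₁) := fun p =>
      (ContinuousLinearMap.fst ℂ H₁ H₂).comp
        ((Polynomial.aeval R p : (H₁ × H₂) →L[ℂ] (H₁ × H₂)).comp
          (ContinuousLinearMap.inr ℂ H₁ H₂))
    PolynomiallyBounded R ∧
    (∀ p : Polynomial ℂ, delta p =
      ∑ j ∈ Finset.range p.natDegree,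
        (T₁ ^ j).comp (X.comp
          (Polynomial.aeval T₂
            (∑ k ∈ Finset.Icc (j + 1) p.natDegree,
              Polynomial.C (p.coeff k) * Polynomial.X ^ (k - 1 - j)) : H₂ →L[ℂ] H₂))) ∧
    ∃ M > (0 : ℝ), ∀ (p : Polynomial ℂ) (B : ℝ),
      (∀ z : ℂ, ‖z‖ ≤ 1 → ‖Polynomial.eval z p‖ ≤ B) →
      ‖delta p‖ ≤
        (∑' j : ℕ, (1 + Real.log (j + 1)) * ‖T₁‖ ^ j) * C₂ * M * ‖X‖ * B :=
  stmt_11_general T₁ T₂ hT₁ C₂ hC₂ X
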